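/- arXiv:1306.1624 — 7 statements merged into one kernel-verified Lean document; each statement's English description precedes it below -/
import Mathlib

section
/- Let π : E → X be a surjective covering map between topological spaces, where E is simply connected and locally path-connected and X is locally path-connected. Fix p₀ ∈ E. Then the group of deck transformations of π, i.e. the group (under composition) of homeomorphisms φ : E ≃ E satisfying π ∘ φ = π, is isomorphic as a group to the fundamental group π₁(X, π(p₀)). -/
variable {E X : Type*} [TopologicalSpace E] [TopologicalSpace X]

/-- The group of deck transformations of a map `π : E → X`: homeomorphisms
`φ : E ≃ₜ E` satisfying `π ∘ φ = π`, under composition. -/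
def DeckGroup (π : E → X) : Type _ := {φ : E ≃ₜ E // π ∘ ⇑φ = π}

instance (π : E → X) : Group (DeckGroup π) where
  mul f g := ⟨g.1.trans f.1, by
    funext x
    have hf := congrFun f.2 (g.1 x)
    have hg := congrFun g.2 x
    simpa using hf.trans hg⟩
  one := ⟨Homeomorph.refl E, rfl⟩
  inv f := ⟨f.1.symm, by
    funext x
    have := congrFun f.2 (f.1.symm x)
    simpa using this.symm⟩
  mul_assoc f g h := Subtype.ext (Homeomorph.ext fun x => rfl)
  one_mul f := Subtype.ext (Homeomorph.ext fun x => rfl)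
  mul_one f := Subtype.ext (Homeomorph.ext fun x => rfl)
  inv_mul_cancel f := Subtype.ext (Homeomorph.ext fun x => f.1.symm_apply_apply x)

/-!
Deck transformations act on `E` commuting with `π`. Since `E` is simply connected and locally
path-connected, `π` lifts through itself sending any point to any other point of the same fibre,
so the action is transitive on fibres; by uniqueness of lifts a deck transformation fixing a point
is the identity, so on an open set where `π` is injective no nontrivial deck transformation moves
a point back into the set. Hence `π` is the quotient covering map of the deck group action, and
for a simply connected total space the fundamental group of the base is anti-isomorphic to the
acting group through the monodromy action on a fibre.
-/

namespace DeckGroup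

variable {π : E → X}

instance : MulAction (DeckGroup π) E where
  smul φ e := φ.1 e
  one_smul _ := rfl
  mul_smul _ _ _ := rfl

theorem eq_one_of_smul_eq [PreconnectedSpace E] (hπ : IsCoveringMap π) {φ : DeckGroup π}
    {e : E} (h : φ • e = e) : φ = 1 :=
  Subtype.ext <| Homeomorph.ext <| congrFun <|
    hπ.eq_of_comp_eq φ.1.continuous continuous_id φ.2 e h

theorem exists_smul_eq [SimplyConnectedSpace E] [LocallyPathConnectedSpace E]
    (hπ : IsCoveringMap π) {e₁ e₂ : E} (h : π e₁ = π e₂) : ∃ φ : DeckGroup π, φ • e₁ = e₂ := by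
  have lift_self : ∀ {a b : E}, π a = π b → ∃ F : C(E, E), F a = b ∧ π ∘ F = π :=
    fun {a b} hab => (hπ.existsUnique_continuousMap_lifts ⟨π, hπ.continuous⟩ a b hab.symm).exists
  obtain ⟨F, hF₁, hFπ⟩ := lift_self h
  obtain ⟨G, hG₂, hGπ⟩ := lift_self h.symm
  have hGF : G ∘ F = id := hπ.eq_of_comp_eq (G.comp F).continuous continuous_id
    (by rw [← Function.comp_assoc, hGπ, hFπ]; rfl) e₁ (by simp [hF₁, hG₂])
  have hFG : F ∘ G = id := hπ.eq_of_comp_eq (F.comp G).continuous continuous_id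
    (by rw [← Function.comp_assoc, hFπ, hGπ]; rfl) e₂ (by simp [hF₁, hG₂])
  exact ⟨⟨⟨⟨F, G, congrFun hGF, congrFun hFG⟩, F.continuous, G.continuous⟩, hFπ⟩, hF₁⟩

end DeckGroup

theorem IsCoveringMap.isQuotientCoveringMap_deckGroup [SimplyConnectedSpace E]
    [LocallyPathConnectedSpace E] {π : E → X} (hπ : IsCoveringMap π)
    (hsurj : Function.Surjective π) : IsQuotientCoveringMap π (DeckGroup π) where
  toIsQuotientMap := hπ.isQuotientMap hsurj
  continuous_const_smul φ := φ.1.continuous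
  apply_eq_iff_mem_orbit {e₁ e₂} :=
    ⟨fun h => DeckGroup.exists_smul_eq hπ h.symm, fun ⟨φ, hφ⟩ => hφ ▸ congrFun φ.2 e₂⟩
  disjoint e := by
    obtain ⟨U, hU, hinj⟩ := isLocallyInjective_iff_nhds.mp hπ.isLocalHomeomorph.isLocallyInjective e
    exact ⟨U, hU, fun φ ⟨_, ⟨u, hu, rfl⟩, hφu⟩ =>
      DeckGroup.eq_one_of_smul_eq hπ (e := u) (hinj hφu hu (congrFun φ.2 u))⟩

theorem deckGroup_mulEquiv_fundamentalGroup_general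
    [SimplyConnectedSpace E] [LocallyPathConnectedSpace E]
    (π : E → X) (hπ : IsCoveringMap π) (hsurj : Function.Surjective π) (p₀ : E) :
    Nonempty (DeckGroup π ≃* FundamentalGroup X (π p₀)) :=
  ⟨(MulEquiv.inv' (DeckGroup π)).trans
    ((hπ.isQuotientCoveringMap_deckGroup hsurj).fundamentalGroupEquiv ⟨p₀, rfl⟩).symm⟩

/-- For a surjective covering map `π : E → X` with `E` simply connected and
locally path-connected and `X` locally path-connected, the group of deck
transformations of `π` is isomorphic to the fundamental group of `X` based at
`π p₀`. -/
theorem deckGroup_mulEquiv_fundamentalGroup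
    [SimplyConnectedSpace E] [LocallyPathConnectedSpace E] [LocallyPathConnectedSpace X]
    (π : E → X) (hπ : IsCoveringMap π) (hsurj : Function.Surjective π) (p₀ : E) :
    Nonempty (DeckGroup π ≃* FundamentalGroup X (π p₀)) :=
  deckGroup_mulEquiv_fundamentalGroup_general π hπ hsurj p₀
end

section
/- Let R > 0, let c ∈ ℂ with c ≠ 0, and let f : ℂ → ℂ be complex-differentiable at every point of A_R = {z ∈ ℂ : |z| > R}, with deriv f z → c as z → ∞. Then there exists R' ≥ R such that f is injective on {z ∈ ℂ : |z| > R'}. (A holomorphic function on a neighborhood of infinity whose derivative has a nonzero limit at infinity is one-to-one in a neighborhood of infinity.) -/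
/-!
Outside a large disk `|f' - c| ≤ ε` with `4ε < |c|`, so by the mean value inequality `f` differs
from `z ↦ c z` by at most `ε` times the length of any segment there. Two points `a`, `b` far from
the origin are joined by a path of at most two such segments of total length `≤ 4|b - a|`: the
segment itself if `⟪a, b⟫ ≥ 0`, otherwise a detour through a point perpendicular to `b - a`. Hence
`|f b - f a - c (b - a)| ≤ 4ε|b - a| < |c||b - a|` unless `a = b`.
-/

open Filter RealInnerProductSpace

theorem Convex.norm_image_sub_le_of_norm_deriv_sub_le {𝕜 G : Type*} [RCLike 𝕜]
    [NormedAddCommGroup G] [NormedSpace 𝕜 G] {f : 𝕜 → G} {s : Set 𝕜} {x y : 𝕜} {c : G} {C : ℝ}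
    (hf : ∀ z ∈ s, DifferentiableAt 𝕜 f z) (bound : ∀ z ∈ s, ‖deriv f z - c‖ ≤ C)
    (hs : Convex ℝ s) (xs : x ∈ s) (ys : y ∈ s) :
    ‖f y - f x - (y - x) • c‖ ≤ C * ‖y - x‖ := by
  refine hs.norm_image_sub_le_of_norm_hasFDerivWithin_le'
    (f' := fun z ↦ (1 : 𝕜 →L[𝕜] 𝕜).smulRight (deriv f z)) (φ := (1 : 𝕜 →L[𝕜] 𝕜).smulRight c)
    (fun z hz ↦ (hf z hz).hasDerivAt.hasFDerivAt.hasFDerivWithinAt) (fun z hz ↦ ?_) xs ys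
  have hsub : (1 : 𝕜 →L[𝕜] 𝕜).smulRight (deriv f z) - (1 : 𝕜 →L[𝕜] 𝕜).smulRight c =
      (1 : 𝕜 →L[𝕜] 𝕜).smulRight (deriv f z - c) := by
    ext; simp
  rw [hsub, ContinuousLinearMap.norm_smulRight_apply, norm_one, one_mul]
  exact bound z hz

section InnerProductSpace

variable {E : Type*} [NormedAddCommGroup E] [InnerProductSpace ℝ E]

theorem segment_subset_setOf_lt_norm {x y : E} {m : ℝ} (hx : 2 * m ^ 2 < ‖x‖ ^ 2)
    (hy : 2 * m ^ 2 < ‖y‖ ^ 2) (hxy : 0 ≤ ⟪x, y⟫) : segment ℝ x y ⊆ {z | m < ‖z‖} := by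
  rintro _ ⟨s, t, hs, ht, hst, rfl⟩
  refine lt_of_pow_lt_pow_left₀ 2 (norm_nonneg _) ?_
  have hsq : ‖s • x + t • y‖ ^ 2 = s ^ 2 * ‖x‖ ^ 2 + 2 * (s * t) * ⟪x, y⟫ + t ^ 2 * ‖y‖ ^ 2 := by
    rw [norm_add_sq_real, norm_smul, norm_smul, inner_smul_left, inner_smul_right,
      Real.norm_of_nonneg hs, Real.norm_of_nonneg ht]
    simp only [conj_trivial]
    ring
  set δ := min (‖x‖ ^ 2) (‖y‖ ^ 2) - 2 * m ^ 2
  have hδ : 0 < δ := sub_pos.2 (lt_min hx hy)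
  have hst2 : 1 ≤ 2 * (s ^ 2 + t ^ 2) := by nlinarith [sq_nonneg (s - t)]
  calc m ^ 2 < 2 * m ^ 2 * (s ^ 2 + t ^ 2) + δ * (s ^ 2 + t ^ 2) := by nlinarith [sq_nonneg m]
    _ ≤ s ^ 2 * ‖x‖ ^ 2 + t ^ 2 * ‖y‖ ^ 2 := by
      nlinarith [min_le_left (‖x‖ ^ 2) (‖y‖ ^ 2), min_le_right (‖x‖ ^ 2) (‖y‖ ^ 2),
        sq_nonneg s, sq_nonneg t]
    _ ≤ ‖s • x + t • y‖ ^ 2 := by rw [hsq]; nlinarith [mul_nonneg (mul_nonneg hs ht) hxy]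

theorem exists_segments_subset_setOf_lt_norm {a b u : E} {m : ℝ} (ha : 2 * m ^ 2 < ‖a‖ ^ 2)
    (hb : 2 * m ^ 2 < ‖b‖ ^ 2) (hu : ⟪u, b - a⟫ = 0) (hu' : ‖u‖ = ‖b - a‖) :
    ∃ w, segment ℝ a w ⊆ {z | m < ‖z‖} ∧ segment ℝ w b ⊆ {z | m < ‖z‖} ∧
      ‖w - a‖ + ‖b - w‖ ≤ 4 * ‖b - a‖ := by
  by_cases hab : 0 ≤ ⟪a, b⟫
  · have hbm : m < ‖b‖ := lt_of_pow_lt_pow_left₀ 2 (norm_nonneg b) (by nlinarith [sq_nonneg m])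
    refine ⟨b, segment_subset_setOf_lt_norm ha hb hab, by simpa [segment_same] using hbm, ?_⟩
    simp only [sub_self, norm_zero, add_zero]
    linarith [norm_nonneg (b - a)]
  have hsq : ‖b - a‖ ^ 2 = ‖b‖ ^ 2 - 2 * ⟪b, a⟫ + ‖a‖ ^ 2 := norm_sub_sq_real b a
  rw [real_inner_comm] at hsq
  have hab' : ‖a‖ ≤ ‖b - a‖ := by nlinarith [norm_nonneg a, norm_nonneg (b - a)]
  have hba' : ‖b‖ ≤ ‖b - a‖ := by nlinarith [norm_nonneg b, norm_nonneg (b - a)]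
  obtain ⟨w, hw, hwba, haw⟩ : ∃ w : E, ‖w‖ = ‖b - a‖ ∧ ⟪w, b - a⟫ = 0 ∧ 0 ≤ ⟪a, w⟫ := by
    rcases le_total 0 ⟪a, u⟫ with h | h
    · exact ⟨u, hu', hu, h⟩
    · exact ⟨-u, by rwa [norm_neg], by rw [inner_neg_left, hu, neg_zero], by
        rwa [inner_neg_right, neg_nonneg]⟩
  have hwb : 0 ≤ ⟪w, b⟫ := by
    rw [inner_sub_right, sub_eq_zero] at hwba
    rwa [hwba, real_inner_comm]
  have hw2 : 2 * m ^ 2 < ‖w‖ ^ 2 := by rw [hw]; nlinarith [norm_nonneg a]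
  refine ⟨w, segment_subset_setOf_lt_norm ha hw2 haw, segment_subset_setOf_lt_norm hw2 hb hwb, ?_⟩
  linarith [norm_sub_le w a, norm_sub_le b w]

end InnerProductSpace

theorem injOn_setOf_lt_norm_of_norm_deriv_sub_le {f : ℂ → ℂ} {c : ℂ} {m ε : ℝ} (hm : 0 ≤ m)
    (hε : 4 * ε < ‖c‖) (hf : ∀ z, m < ‖z‖ → DifferentiableAt ℂ f z)
    (hbd : ∀ z, m < ‖z‖ → ‖deriv f z - c‖ ≤ ε) : Set.InjOn f {z | 2 * m < ‖z‖} := by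
  intro a ha b hb hfab
  have hsq : ∀ z ∈ {z : ℂ | 2 * m < ‖z‖}, 2 * m ^ 2 < ‖z‖ ^ 2 := fun z (hz : 2 * m < ‖z‖) ↦ by
    nlinarith
  have hperp : ⟪Complex.I * (b - a), b - a⟫ = 0 := by
    rw [Complex.inner, map_mul, Complex.conj_I, neg_mul, mul_neg, mul_left_comm, Complex.mul_conj]
    simp
  obtain ⟨w, haw, hwb, hlen⟩ := exists_segments_subset_setOf_lt_norm (hsq a ha) (hsq b hb) hperp
    (by rw [norm_mul, Complex.norm_I, one_mul])
  have hest : ∀ {x y : ℂ}, segment ℝ x y ⊆ {z | m < ‖z‖} →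
      ‖f y - f x - (y - x) * c‖ ≤ ε * ‖y - x‖ := fun hxy ↦
    (convex_segment _ _).norm_image_sub_le_of_norm_deriv_sub_le (fun z hz ↦ hf z (hxy hz))
      (fun z hz ↦ hbd z (hxy hz)) (left_mem_segment ℝ _ _) (right_mem_segment ℝ _ _)
  have hε0 : 0 ≤ ε := (norm_nonneg _).trans (hbd a (by linarith [show 2 * m < ‖a‖ from ha]))
  have key : ‖c‖ * ‖b - a‖ ≤ 4 * ε * ‖b - a‖ :=
    calc ‖c‖ * ‖b - a‖ = ‖(f b - f w - (b - w) * c) + (f w - f a - (w - a) * c)‖ := by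
          rw [← norm_mul, hfab, ← norm_neg]; congr 1; ring
      _ ≤ ε * ‖b - w‖ + ε * ‖w - a‖ := (norm_add_le _ _).trans (add_le_add (hest hwb) (hest haw))
      _ ≤ 4 * ε * ‖b - a‖ := by nlinarith
  have : ‖b - a‖ = 0 := by nlinarith [norm_nonneg (b - a)]
  exact (sub_eq_zero.1 (norm_eq_zero.1 this)).symm

/-- A function holomorphic on a neighborhood of infinity whose derivative tends to a
nonzero limit at infinity is injective in a neighborhood of infinity. -/
theorem injOn_nhds_infty_of_deriv_tendsto (R : ℝ) (hR : 0 < R) (c : ℂ) (hc : c ≠ 0)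
    (f : ℂ → ℂ) (hf : ∀ z : ℂ, R < ‖z‖ → DifferentiableAt ℂ f z)
    (hderiv : Tendsto (deriv f) (Bornology.cobounded ℂ) (nhds c)) :
    ∃ R' : ℝ, R ≤ R' ∧ Set.InjOn f {z : ℂ | R' < ‖z‖} := by
  have hε : 0 < ‖c‖ / 5 := by have := norm_pos_iff.2 hc; positivity
  obtain ⟨r, -, hr⟩ := hasBasis_cobounded_norm.eventually_iff.1 <|
    hderiv.eventually (Metric.closedBall_mem_nhds c hε)
  set m := max R r
  refine ⟨2 * m, by linarith [le_max_left R r], ?_⟩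
  refine injOn_setOf_lt_norm_of_norm_deriv_sub_le (c := c) (ε := ‖c‖ / 5)
    (hR.le.trans (le_max_left R r)) (by linarith)
    (fun z hz ↦ hf z ((le_max_left R r).trans_lt hz)) (fun z hz ↦ ?_)
  rw [← dist_eq_norm]
  exact hr ((le_max_right R r).trans hz.le)
end

section
/- Let R > 0, let c ∈ ℂ with c ≠ 0, and let f : ℂ → ℂ be complex-differentiable at every point of A_R = {z ∈ ℂ : |z| > R}, with deriv f z → c as z → ∞. Then there exists a₀ ∈ ℂ such that f(z) − c·z → a₀ as z → ∞. (Such an f has an expansion f(z) = c·z + a₀ + Σ_{n≥1} αₙ z^{−n} in a neighborhood of infinity; in particular f(z) − c·z converges at infinity.) -/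
/-!
Put `h z = f z - c * z`, so that `deriv h → 0` at infinity. Joining `z` to a fixed real point `r`
by an arc of the circle of radius `‖z‖` followed by a segment of the real axis, the mean value
inequality gives `h z = o(z)`. Hence `w ↦ h w⁻¹` is `o(w⁻¹)` at `0`, so by Riemann's removable
singularity theorem it has a limit there, which is the limit of `h` at infinity.
-/

open Filter Topology Complex Real Bornology Asymptotics

section

variable {E : Type*} [NormedAddCommGroup E] [NormedSpace ℂ E]

theorem norm_sub_ofReal_norm_le_of_norm_deriv_le {h : ℂ → E} {C : ℝ} {z : ℂ}
    (hd : ∀ w : ℂ, ‖w‖ = ‖z‖ → DifferentiableAt ℂ h w)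
    (hC : ∀ w : ℂ, ‖w‖ = ‖z‖ → ‖deriv h w‖ ≤ C) :
    ‖h z - h ‖z‖‖ ≤ C * (π * ‖z‖) := by
  have hnorm (θ : ℝ) : ‖circleMap 0 ‖z‖ θ‖ = ‖z‖ := by simp
  have hderiv (θ : ℝ) : HasDerivAt (fun θ => h (circleMap 0 ‖z‖ θ))
      ((circleMap 0 ‖z‖ θ * I) • deriv h (circleMap 0 ‖z‖ θ)) θ :=
    (hd _ (hnorm θ)).hasDerivAt.scomp θ (hasDerivAt_circleMap 0 ‖z‖ θ)
  have hbound (θ : ℝ) : ‖(circleMap 0 ‖z‖ θ * I) • deriv h (circleMap 0 ‖z‖ θ)‖ ≤ ‖z‖ * C := by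
    rw [norm_smul, norm_mul, norm_I, mul_one, hnorm]
    exact mul_le_mul_of_nonneg_left (hC _ (hnorm θ)) (norm_nonneg z)
  have hmvt := convex_univ.norm_image_sub_le_of_norm_hasDerivWithin_le
    (fun θ _ => (hderiv θ).hasDerivWithinAt) (fun θ _ => hbound θ) (Set.mem_univ 0)
    (Set.mem_univ (arg z))
  have hC0 : 0 ≤ C := (norm_nonneg _).trans (hC z rfl)
  have hend : circleMap 0 ‖z‖ (arg z) = z := by
    simp [circleMap, norm_mul_exp_arg_mul_I z]
  have hstart : circleMap 0 ‖z‖ 0 = ‖z‖ := by simp [circleMap]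
  rw [hend, hstart, sub_zero, Real.norm_eq_abs] at hmvt
  calc ‖h z - h ‖z‖‖ ≤ ‖z‖ * C * |arg z| := hmvt
    _ ≤ ‖z‖ * C * π := by gcongr; exact abs_arg_le_pi z
    _ = C * (π * ‖z‖) := by ring

theorem norm_sub_ofReal_le_of_norm_deriv_le {h : ℂ → E} {r C : ℝ} (hr : 0 ≤ r)
    (hd : ∀ w : ℂ, r ≤ ‖w‖ → DifferentiableAt ℂ h w)
    (hC : ∀ w : ℂ, r ≤ ‖w‖ → ‖deriv h w‖ ≤ C) {z : ℂ} (hz : r ≤ ‖z‖) :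
    ‖h z - h r‖ ≤ C * ((π + 1) * ‖z‖) := by
  have hC0 : 0 ≤ C := (norm_nonneg _).trans (hC z hz)
  have harc : ‖h z - h ‖z‖‖ ≤ C * (π * ‖z‖) :=
    norm_sub_ofReal_norm_le_of_norm_deriv_le (fun w hw => hd w (hw ▸ hz))
      (fun w hw => hC w (hw ▸ hz))
  have hhalf : ∀ w ∈ {w : ℂ | r ≤ w.re}, r ≤ ‖w‖ := fun w hw => hw.out.trans (re_le_norm w)
  have hradial : ‖h ‖z‖ - h r‖ ≤ C * ‖((‖z‖ : ℝ) : ℂ) - r‖ :=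
    (convex_halfSpace_re_ge r).norm_image_sub_le_of_norm_deriv_le
      (fun w hw => hd w (hhalf w hw)) (fun w hw => hC w (hhalf w hw))
      (by simp) (by simpa using hz)
  rw [← ofReal_sub, norm_real, Real.norm_of_nonneg (sub_nonneg.2 hz)] at hradial
  calc ‖h z - h r‖ ≤ ‖h z - h ‖z‖‖ + ‖h ‖z‖ - h r‖ := norm_sub_le_norm_sub_add_norm_sub _ _ _
    _ ≤ C * (π * ‖z‖) + C * (‖z‖ - r) := add_le_add harc hradial
    _ ≤ C * ((π + 1) * ‖z‖) := by nlinarith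

theorem isLittleO_cobounded_id_of_tendsto_deriv {h : ℂ → E}
    (hd : ∀ᶠ z in cobounded ℂ, DifferentiableAt ℂ h z)
    (h' : Tendsto (deriv h) (cobounded ℂ) (𝓝 0)) : h =o[cobounded ℂ] id := by
  refine isLittleO_iff.2 fun ε hε => ?_
  set δ := ε / (π + 2)
  have hδ : 0 < δ := by positivity
  have hsmall : ∀ᶠ z in cobounded ℂ, DifferentiableAt ℂ h z ∧ ‖deriv h z‖ ≤ δ :=
    hd.and (h'.norm.eventually (ge_mem_nhds (by simpa using hδ)))
  rw [← comap_norm_atTop, eventually_comap, eventually_atTop] at hsmall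
  obtain ⟨r₀, hr₀⟩ := hsmall
  set r := max r₀ 0
  have hr (w : ℂ) (hw : r ≤ ‖w‖) : DifferentiableAt ℂ h w ∧ ‖deriv h w‖ ≤ δ :=
    hr₀ ‖w‖ (le_of_max_le_left hw) w rfl
  filter_upwards [tendsto_norm_cobounded_atTop.eventually_ge_atTop r,
    tendsto_norm_cobounded_atTop.eventually_ge_atTop (‖h r‖ / δ)] with z hzr hzh
  have hhr : ‖h r‖ ≤ δ * ‖z‖ := by rwa [div_le_iff₀' hδ] at hzh
  calc ‖h z‖ ≤ ‖h z - h r‖ + ‖h r‖ := norm_le_norm_sub_add _ _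
    _ ≤ δ * ((π + 1) * ‖z‖) + δ * ‖z‖ :=
      add_le_add (norm_sub_ofReal_le_of_norm_deriv_le (le_max_right _ _)
        (fun w hw => (hr w hw).1) (fun w hw => (hr w hw).2) hzr) hhr
    _ = ε * ‖id z‖ := by simp only [δ, id]; field_simp; ring

theorem exists_tendsto_cobounded_of_isLittleO_id [CompleteSpace E] {h : ℂ → E}
    (hd : ∀ᶠ z in cobounded ℂ, DifferentiableAt ℂ h z) (ho : h =o[cobounded ℂ] id) :
    ∃ a, Tendsto h (cobounded ℂ) (𝓝 a) := by
  have hdinv : ∀ᶠ w in 𝓝[≠] (0 : ℂ), DifferentiableAt ℂ (fun w => h w⁻¹) w := by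
    filter_upwards [tendsto_inv₀_nhdsNE_zero.eventually hd, self_mem_nhdsWithin] with w hw hw0
    exact hw.comp w (differentiableAt_inv hw0)
  have hinv_large : Tendsto (fun w : ℂ => ‖w⁻¹‖) (𝓝[≠] 0) atTop :=
    tendsto_norm_cobounded_atTop.comp tendsto_inv₀_nhdsNE_zero
  have hoinv : (fun w => h w⁻¹ - h 0⁻¹) =o[𝓝[≠] (0 : ℂ)] fun w => (w - 0)⁻¹ := by
    simp only [sub_zero]
    exact (ho.comp_tendsto tendsto_inv₀_nhdsNE_zero).sub
      (isLittleO_const_left.2 (Or.inr hinv_large))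
  have hlim := (tendsto_limUnder_of_differentiable_on_punctured_nhds_of_isLittleO hdinv
    hoinv).comp tendsto_inv₀_cobounded'
  exact ⟨_, by simpa [Function.comp_def] using hlim⟩

end

theorem sub_linear_tendsto_of_deriv_tendsto_general (R : ℝ) (c : ℂ)
    (f : ℂ → ℂ) (hf : ∀ z : ℂ, R < ‖z‖ → DifferentiableAt ℂ f z)
    (hderiv : Tendsto (deriv f) (Bornology.cobounded ℂ) (nhds c)) :
    ∃ a₀ : ℂ, Tendsto (fun z => f z - c * z) (Bornology.cobounded ℂ) (nhds a₀) := by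
  have hlarge : ∀ᶠ z in cobounded ℂ, R < ‖z‖ := tendsto_norm_cobounded_atTop.eventually_gt_atTop R
  have hd : ∀ᶠ z in cobounded ℂ, DifferentiableAt ℂ (fun z => f z - c * z) z :=
    hlarge.mono fun z hz => (hf z hz).sub (differentiableAt_id.const_mul c)
  have hderiv' : Tendsto (deriv fun z => f z - c * z) (cobounded ℂ) (𝓝 0) := by
    refine (sub_self c ▸ hderiv.sub_const c).congr' (hlarge.mono fun z hz => ?_)
    rw [((hf z hz).hasDerivAt.fun_sub ((hasDerivAt_id' z).const_mul c)).deriv, mul_one]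
  exact exists_tendsto_cobounded_of_isLittleO_id hd
    (isLittleO_cobounded_id_of_tendsto_deriv hd hderiv')

/-- A function holomorphic on a neighborhood of infinity whose derivative tends to a
nonzero limit `c` at infinity has an expansion `f z = c * z + a₀ + O(1/z)` near
infinity; in particular `f z - c * z` converges at infinity. -/
theorem sub_linear_tendsto_of_deriv_tendsto (R : ℝ) (hR : 0 < R) (c : ℂ) (hc : c ≠ 0)
    (f : ℂ → ℂ) (hf : ∀ z : ℂ, R < ‖z‖ → DifferentiableAt ℂ f z)
    (hderiv : Tendsto (deriv f) (Bornology.cobounded ℂ) (nhds c)) :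
    ∃ a₀ : ℂ, Tendsto (fun z => f z - c * z) (Bornology.cobounded ℂ) (nhds a₀) :=
  sub_linear_tendsto_of_deriv_tendsto_general R c f hf hderiv
end

section
/- Let R > 0, let c ∈ ℂ with c ≠ 0, and let f : ℂ → ℂ be complex-differentiable at every point of A_R = {z ∈ ℂ : |z| > R}, with deriv f z → c as z → ∞. Then |f(z)| → ∞ as |z| → ∞, i.e. f tends to the cobounded filter along the cobounded filter: Tendsto f (Filter.cobounded ℂ) (Filter.cobounded ℂ). -/
/-!
Write `f z = c z + g z`. Then `g' → 0` at infinity, and the mean value inequality along the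
radial segment from `r z / ‖z‖` to `z`, which stays outside the ball of radius `r`, together
with the boundedness of `g` on the compact sphere of radius `r`, gives `‖g z‖ ≤ ε ‖z‖ + K` for
every `ε > 0`; so `g = o(z)` and `‖f z‖ ≥ ‖c‖ ‖z‖ / 2` eventually.
-/

open Filter Topology Asymptotics Bornology

section RadialSegment

variable {E : Type*} [NormedAddCommGroup E] [NormedSpace ℝ E]

theorem le_norm_of_mem_segment_smul_self {z w : E} {r : ℝ} (hr : 0 < r) (hz : r ≤ ‖z‖)
    (hw : w ∈ segment ℝ ((r / ‖z‖) • z) z) : r ≤ ‖w‖ := by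
  have hz0 : 0 < ‖z‖ := hr.trans_le hz
  obtain ⟨a, b, ha, hb, hab, rfl⟩ := hw
  rw [smul_smul, ← add_smul, norm_smul, Real.norm_of_nonneg (by positivity), add_mul, mul_assoc,
    div_mul_cancel₀ _ hz0.ne']
  nlinarith

end RadialSegment

section GrowthAtInfinity

variable {𝕜 E F : Type*} [NontriviallyNormedField 𝕜] [IsRCLikeNormedField 𝕜]
  [NormedAddCommGroup E] [NormedSpace ℝ E] [NormedSpace 𝕜 E] [ProperSpace E]
  [NormedAddCommGroup F] [NormedSpace 𝕜 F]

theorem exists_norm_le_mul_norm_add_of_norm_fderiv_le {f : E → F} {r C : ℝ} (hr : 0 < r)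
    (hf : ∀ z, r ≤ ‖z‖ → DifferentiableAt 𝕜 f z) (hf' : ∀ z, r ≤ ‖z‖ → ‖fderiv 𝕜 f z‖ ≤ C) :
    ∃ K, ∀ z, r ≤ ‖z‖ → ‖f z‖ ≤ C * ‖z‖ + K := by
  have hcont : ContinuousOn f (Metric.sphere 0 r) := fun z hz =>
    (hf z (mem_sphere_zero_iff_norm.1 hz).ge).continuousAt.continuousWithinAt
  obtain ⟨K, hK⟩ := (isCompact_sphere (0 : E) r).exists_bound_of_continuousOn hcont
  refine ⟨K - C * r, fun z hz => ?_⟩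
  have hz0 : 0 < ‖z‖ := hr.trans_le hz
  set u := (r / ‖z‖) • z
  have hu : ‖u‖ = r := by
    rw [norm_smul, Real.norm_of_nonneg (by positivity), div_mul_cancel₀ _ hz0.ne']
  have hzu : ‖z - u‖ = ‖z‖ - r := by
    rw [show z - u = (1 - r / ‖z‖) • z by rw [sub_smul, one_smul], norm_smul,
      Real.norm_of_nonneg (sub_nonneg.2 (div_le_one_of_le₀ hz hz0.le)), sub_mul, one_mul,
      div_mul_cancel₀ _ hz0.ne']
  have hseg : ∀ w ∈ segment ℝ u z, r ≤ ‖w‖ := fun w => le_norm_of_mem_segment_smul_self hr hz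
  have hmvt : ‖f z - f u‖ ≤ C * ‖z - u‖ :=
    (convex_segment u z).norm_image_sub_le_of_norm_fderiv_le (fun w hw => hf w (hseg w hw))
      (fun w hw => hf' w (hseg w hw)) (left_mem_segment ℝ u z) (right_mem_segment ℝ u z)
  calc ‖f z‖ ≤ ‖f u‖ + ‖f z - f u‖ := norm_le_insert' _ _
    _ ≤ K + C * (‖z‖ - r) := add_le_add (hK u (mem_sphere_zero_iff_norm.2 hu)) (hzu ▸ hmvt)
    _ = C * ‖z‖ + (K - C * r) := by ring

theorem isLittleO_id_cobounded_of_tendsto_fderiv_zero {f : E → F}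
    (hf : ∀ᶠ z in cobounded E, DifferentiableAt 𝕜 f z)
    (hf' : Tendsto (fderiv 𝕜 f) (cobounded E) (𝓝 0)) : f =o[cobounded E] id := by
  refine IsLittleO.of_bound fun ε hε => ?_
  obtain ⟨r, -, hr⟩ := hasBasis_cobounded_norm.eventually_iff.1 <| hf.and <|
    hf'.norm.eventually (ge_mem_nhds (show ‖(0 : E →L[𝕜] F)‖ < ε / 2 by simpa using half_pos hε))
  obtain ⟨K, hK⟩ := exists_norm_le_mul_norm_add_of_norm_fderiv_le (r := max r 1)
    (by positivity) (fun z hz => (hr (le_of_max_le_left hz)).1)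
    (fun z hz => (hr (le_of_max_le_left hz)).2)
  filter_upwards [eventually_cobounded_le_norm (max r 1), eventually_cobounded_le_norm (2 * K / ε)]
    with z hz hzK
  rw [div_le_iff₀ hε] at hzK
  calc ‖f z‖ ≤ ε / 2 * ‖z‖ + K := hK z hz
    _ ≤ ε * ‖id z‖ := by rw [id]; linarith

end GrowthAtInfinity

theorem tendsto_cobounded_smul_add_of_isLittleO {𝕜 E : Type*} [NormedField 𝕜]
    [NormedAddCommGroup E] [NormedSpace 𝕜 E] {c : 𝕜} (hc : c ≠ 0) {g : E → E}
    (hg : g =o[cobounded E] id) : Tendsto (fun z => c • z + g z) (cobounded E) (cobounded E) := by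
  have hc' : 0 < ‖c‖ := norm_pos_iff.2 hc
  rw [← tendsto_norm_atTop_iff_cobounded]
  refine tendsto_atTop_mono' _ ?_
    (tendsto_norm_cobounded_atTop.const_mul_atTop (half_pos hc'))
  filter_upwards [hg.bound (half_pos hc')] with z hz
  calc ‖c‖ / 2 * ‖z‖ = ‖c • z‖ - ‖c‖ / 2 * ‖id z‖ := by rw [norm_smul, id]; ring
    _ ≤ ‖c • z‖ - ‖g z‖ := by linarith
    _ ≤ ‖c • z + g z‖ := norm_sub_le_norm_add _ _

theorem tendsto_cobounded_of_deriv_tendsto_general (R : ℝ) (c : ℂ) (hc : c ≠ 0)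
    (f : ℂ → ℂ) (hf : ∀ z : ℂ, R < ‖z‖ → DifferentiableAt ℂ f z)
    (hderiv : Tendsto (deriv f) (Bornology.cobounded ℂ) (nhds c)) :
    Tendsto f (Bornology.cobounded ℂ) (Bornology.cobounded ℂ) := by
  set g : ℂ → ℂ := fun z => f z - c * z
  have hf_ev : ∀ᶠ z in cobounded ℂ, DifferentiableAt ℂ f z :=
    (eventually_cobounded_le_norm (R + 1)).mono fun z hz => hf z (by linarith)
  have hg_diff : ∀ᶠ z in cobounded ℂ, DifferentiableAt ℂ g z :=
    hf_ev.mono fun z hz => hz.sub (differentiableAt_id.const_mul c)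
  have hg_deriv : Tendsto (fderiv ℂ g) (cobounded ℂ) (𝓝 0) := by
    rw [tendsto_zero_iff_norm_tendsto_zero]
    refine (tendsto_zero_iff_norm_tendsto_zero.1 (sub_self c ▸ hderiv.sub_const c)).congr' ?_
    filter_upwards [hf_ev] with z hz
    have hg : HasDerivAt g (deriv f z - c) z :=
      (hz.hasDerivAt.sub ((hasDerivAt_id' z).const_mul c)).congr_deriv (by rw [mul_one])
    rw [← norm_deriv_eq_norm_fderiv, hg.deriv]
  simpa [g] using
    tendsto_cobounded_smul_add_of_isLittleO hc (isLittleO_id_cobounded_of_tendsto_fderiv_zero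
      hg_diff hg_deriv)

/-- A function holomorphic on a neighborhood of infinity whose derivative tends to a
nonzero limit at infinity tends to infinity at infinity. -/
theorem tendsto_cobounded_of_deriv_tendsto (R : ℝ) (hR : 0 < R) (c : ℂ) (hc : c ≠ 0)
    (f : ℂ → ℂ) (hf : ∀ z : ℂ, R < ‖z‖ → DifferentiableAt ℂ f z)
    (hderiv : Tendsto (deriv f) (Bornology.cobounded ℂ) (nhds c)) :
    Tendsto f (Bornology.cobounded ℂ) (Bornology.cobounded ℂ) :=
  tendsto_cobounded_of_deriv_tendsto_general R c hc f hf hderiv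
end

section
/- Let R > 0, let c ∈ ℂ with c ≠ 0, and let f : ℂ → ℂ be complex-differentiable at every point of A_R = {z ∈ ℂ : |z| > R}, with deriv f z → c as z → ∞. Then there exist ε > 0 and a function G : ℂ → ℂ that is complex-differentiable at every point of the open ball {z : |z| < ε}, satisfying G(0) = 0, deriv G 0 = c⁻¹, and G(z) = (f(z⁻¹))⁻¹ for all z with 0 < |z| < ε. (The classical inversion g(z) = 1/f(1/z) has a removable singularity at the origin, with nonzero derivative there.) -/
open Filter

/-!
Put `h w = f w - c w`. Since `deriv h → 0` at infinity, the mean value inequality along the radial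
segment from the sphere `‖z‖ = r` to `w` bounds `‖h w‖` by `M + ε ‖w‖`, so `h w = o(w)` and
`f w / w → c`. For `G z = 1 / f (1 / z)` extended by `G 0 = 0` this says
`slope G 0 z = (f z⁻¹ / z⁻¹)⁻¹ → c⁻¹`, so `G` is differentiable at `0` outright, with no need for
Riemann's removable singularity theorem. Off `0`, `f (1 / z) ≠ 0` for small `z` because `c ≠ 0`.
-/

open Bornology Asymptotics Metric

section

variable {𝕜 E : Type*} [RCLike 𝕜] [NormedAddCommGroup E] [NormedSpace 𝕜 E]

theorem norm_sub_le_of_norm_deriv_le_radial {h : 𝕜 → E} {r C : ℝ} (hr : 0 < r)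
    (hd : ∀ z : 𝕜, r ≤ ‖z‖ → DifferentiableAt 𝕜 h z) (hC : ∀ z : 𝕜, r ≤ ‖z‖ → ‖deriv h z‖ ≤ C)
    {w : 𝕜} (hw : r ≤ ‖w‖) : ‖h w - h ((r / ‖w‖) • w)‖ ≤ C * (‖w‖ - r) := by
  have hw0 : 0 < ‖w‖ := hr.trans_le hw
  have hseg : ∀ z ∈ segment ℝ ((r / ‖w‖) • w) w, r ≤ ‖z‖ := by
    rintro _ ⟨a, b, ha, hb, hab, rfl⟩
    rw [smul_smul, ← add_smul, norm_smul, Real.norm_of_nonneg (by positivity), add_mul,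
      mul_assoc, div_mul_cancel₀ _ hw0.ne']
    nlinarith
  have hdist : ‖w - (r / ‖w‖) • w‖ = ‖w‖ - r := by
    have hcoef : 0 ≤ 1 - r / ‖w‖ := sub_nonneg.2 ((div_le_one hw0).2 hw)
    rw [show w - (r / ‖w‖) • w = (1 - r / ‖w‖) • w by rw [sub_smul, one_smul], norm_smul,
      Real.norm_of_nonneg hcoef, sub_mul, one_mul, div_mul_cancel₀ _ hw0.ne']
  rw [← hdist]
  exact (convex_segment _ _).norm_image_sub_le_of_norm_deriv_le
    (fun z hz => hd z (hseg z hz)) (fun z hz => hC z (hseg z hz))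
    (left_mem_segment ℝ _ _) (right_mem_segment ℝ _ _)

theorem isLittleO_cobounded_of_tendsto_deriv_zero {h : 𝕜 → E}
    (hd : ∀ᶠ z in cobounded 𝕜, DifferentiableAt 𝕜 h z)
    (hderiv : Tendsto (deriv h) (cobounded 𝕜) (nhds 0)) : h =o[cobounded 𝕜] id := by
  refine isLittleO_iff.2 fun ε hε => ?_
  obtain ⟨r₀, -, hr₀⟩ := hasBasis_cobounded_norm.eventually_iff.1
    (hd.and (hderiv.norm.eventually (ge_mem_nhds (show ‖(0 : E)‖ < ε / 2 by simpa using half_pos hε))))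
  set r := max r₀ 1
  have hr : 0 < r := zero_lt_one.trans_le (le_max_right _ _)
  have hnear : ∀ z : 𝕜, r ≤ ‖z‖ → DifferentiableAt 𝕜 h z ∧ ‖deriv h z‖ ≤ ε / 2 :=
    fun z hz => hr₀ ((le_max_left _ _).trans hz)
  obtain ⟨M, hM⟩ := (isCompact_sphere (0 : 𝕜) r).exists_bound_of_continuousOn fun z hz =>
    (hnear z (by simp_all)).1.continuousAt.continuousWithinAt
  filter_upwards [hasBasis_cobounded_norm.mem_of_mem (i := max r (2 * M / ε)) trivial] with w hw
  have hrw : r ≤ ‖w‖ := (le_max_left _ _).trans hw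
  have hMw : 2 * M / ε ≤ ‖w‖ := (le_max_right _ _).trans hw
  have hsphere : ‖h ((r / ‖w‖) • w)‖ ≤ M := hM _ (by
    rw [mem_sphere_zero_iff_norm, norm_smul, Real.norm_of_nonneg (by positivity),
      div_mul_cancel₀ _ (hr.trans_le hrw).ne'])
  have hradial := norm_sub_le_of_norm_deriv_le_radial hr (fun z hz => (hnear z hz).1)
    (fun z hz => (hnear z hz).2) hrw
  rw [div_le_iff₀ hε] at hMw
  calc ‖h w‖ ≤ ‖h ((r / ‖w‖) • w)‖ + ‖h w - h ((r / ‖w‖) • w)‖ := norm_le_insert' _ _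
    _ ≤ M + ε / 2 * (‖w‖ - r) := add_le_add hsphere hradial
    _ ≤ ε * ‖id w‖ := by rw [id]; nlinarith

theorem tendsto_div_self_of_tendsto_deriv {f : 𝕜 → 𝕜} {c : 𝕜}
    (hd : ∀ᶠ z in cobounded 𝕜, DifferentiableAt 𝕜 f z)
    (hderiv : Tendsto (deriv f) (cobounded 𝕜) (nhds c)) :
    Tendsto (fun w => f w / w) (cobounded 𝕜) (nhds c) := by
  have hlin (z : 𝕜) : HasDerivAt (fun z => c * z) c z := by
    simpa using (hasDerivAt_id z).const_mul c
  have hdiff : ∀ᶠ z in cobounded 𝕜, DifferentiableAt 𝕜 (fun z => f z - c * z) z :=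
    hd.mono fun z hz => hz.sub (hlin z).differentiableAt
  have hderiv' : Tendsto (deriv fun z => f z - c * z) (cobounded 𝕜) (nhds 0) := by
    rw [← sub_self c]
    refine (hderiv.sub_const c).congr' (hd.mono fun z hz => ?_)
    exact (hz.hasDerivAt.sub (hlin z)).deriv.symm
  have hsmall := (isLittleO_cobounded_of_tendsto_deriv_zero hdiff hderiv').tendsto_div_nhds_zero
  rw [← zero_add c]
  refine (hsmall.add_const c).congr' ((eventually_ne_cobounded 0).mono fun w hw => ?_)
  simp only [id, sub_div, mul_div_cancel_right₀ _ hw, sub_add_cancel]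

end

theorem hasDerivAt_update_inv_comp_inv {𝕜 : Type*} [NontriviallyNormedField 𝕜] [DecidableEq 𝕜]
    {f : 𝕜 → 𝕜} {c : 𝕜} (hc : c ≠ 0) (hf : Tendsto (fun w => f w / w) (cobounded 𝕜) (nhds c)) :
    HasDerivAt (Function.update (fun z => (f z⁻¹)⁻¹) 0 0) c⁻¹ 0 := by
  rw [hasDerivAt_iff_tendsto_slope]
  refine ((hf.inv₀ hc).comp tendsto_inv₀_nhdsNE_zero).congr' ?_
  filter_upwards [self_mem_nhdsWithin] with z (hz : z ≠ 0)
  simp [slope_def_field, Function.update_of_ne hz, div_eq_mul_inv, mul_comm]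

theorem inversion_removable_singularity_general (R : ℝ) (c : ℂ) (hc : c ≠ 0)
    (f : ℂ → ℂ) (hf : ∀ z : ℂ, R < ‖z‖ → DifferentiableAt ℂ f z)
    (hderiv : Tendsto (deriv f) (Bornology.cobounded ℂ) (nhds c)) :
    ∃ ε > (0 : ℝ), ∃ G : ℂ → ℂ,
      (∀ z : ℂ, ‖z‖ < ε → DifferentiableAt ℂ G z) ∧
      G 0 = 0 ∧ deriv G 0 = c⁻¹ ∧
      ∀ z : ℂ, 0 < ‖z‖ → ‖z‖ < ε → G z = (f z⁻¹)⁻¹ := by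
  have hdiff : ∀ᶠ w in cobounded ℂ, DifferentiableAt ℂ f w :=
    (tendsto_norm_cobounded_atTop.eventually_gt_atTop R).mono hf
  have hratio := tendsto_div_self_of_tendsto_deriv hdiff hderiv
  have hnear : ∀ᶠ w in cobounded ℂ, DifferentiableAt ℂ f w ∧ f w ≠ 0 :=
    hdiff.and ((hratio.eventually_ne hc).mono fun w hw h0 => by simp [h0] at hw)
  obtain ⟨ε, hε, hball⟩ := mem_nhdsWithin_iff.1 (tendsto_inv₀_nhdsNE_zero.eventually hnear)
  set G := Function.update (fun z : ℂ => (f z⁻¹)⁻¹) 0 0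
  have hG0 : HasDerivAt G c⁻¹ 0 := hasDerivAt_update_inv_comp_inv hc hratio
  refine ⟨ε, hε, G, fun z hz => ?_, Function.update_self _ _ _, hG0.deriv,
    fun z hz _ => Function.update_of_ne (norm_pos_iff.1 hz) _ _⟩
  rcases eq_or_ne z 0 with rfl | hz0
  · exact hG0.differentiableAt
  obtain ⟨hfd, hfne⟩ : DifferentiableAt ℂ f z⁻¹ ∧ f z⁻¹ ≠ 0 := hball ⟨by simpa using hz, hz0⟩
  refine ((hfd.comp z (differentiableAt_inv hz0)).inv hfne).congr_of_eventuallyEq ?_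
  filter_upwards [isOpen_ne.mem_nhds hz0] with y hy using Function.update_of_ne hy _ _

/-- The classical inversion `g z = 1 / f (1 / z)` of a function `f` holomorphic near
infinity whose derivative tends to a nonzero limit `c` at infinity has a removable
singularity at the origin: it extends to a function `G` holomorphic near `0` with
`G 0 = 0` and `deriv G 0 = c⁻¹ ≠ 0`. -/
theorem inversion_removable_singularity (R : ℝ) (hR : 0 < R) (c : ℂ) (hc : c ≠ 0)
    (f : ℂ → ℂ) (hf : ∀ z : ℂ, R < ‖z‖ → DifferentiableAt ℂ f z)
    (hderiv : Tendsto (deriv f) (Bornology.cobounded ℂ) (nhds c)) :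
    ∃ ε > (0 : ℝ), ∃ G : ℂ → ℂ,
      (∀ z : ℂ, ‖z‖ < ε → DifferentiableAt ℂ G z) ∧
      G 0 = 0 ∧ deriv G 0 = c⁻¹ ∧
      ∀ z : ℂ, 0 < ‖z‖ → ‖z‖ < ε → G z = (f z⁻¹)⁻¹ :=
  inversion_removable_singularity_general R c hc f hf hderiv
end

section
/- Let R > 0 and let h : ℂ → ℂ be complex-differentiable at every point of A_R = {z ∈ ℂ : |z| > R}, and suppose h is even on A_R, i.e. h(−z) = h(z) for all z with |z| > R. Then h has a global primitive on A_R: there exists f : ℂ → ℂ such that for every z with |z| > R, f has derivative h(z) at z (HasDerivAt f (h z) z). (An even holomorphic function on a neighborhood of infinity has vanishing residue at infinity, hence admits a single-valued primitive there; this expresses the trivial monodromy of a metric quadrupole.) -/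
/-!
Pull `h` back along `exp`: with `a = log R`, the function `φ w = exp w * h (exp w)` is
holomorphic on the half-plane `a < re w`, and evenness of `h` makes it antiperiodic,
`φ (w + π i) = -φ w` (this is the vanishing of the residue at infinity). The wedge integral of `φ`
from a real base point is a primitive on the half-plane: it differs by a constant from the wedge
integral based at the centre of a disc in the half-plane around any given point, where Morera's
theorem applies. Antiperiodicity kills the integral over every vertical segment of length `2πn`,
so this primitive is `2πi`-periodic and therefore descends through `exp` to a primitive of `h`.
-/

open Complex Metric Filter Topology MeasureTheory intervalIntegral
open scoped Real

theorem Function.Antiperiodic.intervalIntegral_add_two_mul_eq_zero {E : Type*}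
    [NormedAddCommGroup E] [NormedSpace ℝ E] {g : ℝ → E} {p : ℝ}
    (hg : Function.Antiperiodic g p) (t : ℝ) : ∫ x in t..t + 2 * p, g x = 0 := by
  have h : ∫ x in t..t + 2 * p, g x = -∫ x in t..t + 2 * p, g x := calc
    _ = ∫ x in (t + p)..(t + p) + 2 * p, g x := hg.periodic_two_mul.intervalIntegral_add_eq _ _
    _ = ∫ x in t..t + 2 * p, g (x + p) := by rw [integral_comp_add_right]; ring_nf
    _ = -∫ x in t..t + 2 * p, g x := by simp only [hg _, intervalIntegral.integral_neg]
  have h2 : (2 : ℝ) • ∫ x in t..t + 2 * p, g x = 0 := by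
    rw [two_smul]; nth_rewrite 2 [h]; exact add_neg_cancel _
  exact (smul_eq_zero.mp h2).resolve_left two_ne_zero

theorem Function.Antiperiodic.intervalIntegral_add_int_mul_eq_zero {E : Type*}
    [NormedAddCommGroup E] [NormedSpace ℝ E] {g : ℝ → E} {p : ℝ}
    (hg : Function.Antiperiodic g p) (hint : ∀ t₁ t₂, IntervalIntegrable g volume t₁ t₂)
    (n : ℤ) (t : ℝ) : ∫ x in t..t + n * (2 * p), g x = 0 := by
  rw [← zsmul_eq_mul, hg.periodic_two_mul.intervalIntegral_add_zsmul_eq n t hint,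
    hg.intervalIntegral_add_two_mul_eq_zero, smul_zero]

namespace Complex

variable {E : Type*} [NormedAddCommGroup E] [NormedSpace ℂ E] {f : ℂ → E} {a : ℝ}

theorem ball_ofReal_subset_re_gt (a x : ℝ) : ball (x : ℂ) (x - a) ⊆ {w | a < w.re} := by
  intro w hw
  have := (abs_re_le_norm (w - x)).trans_lt (mem_ball_iff_norm.mp hw)
  rw [sub_re, ofReal_re, abs_lt] at this
  exact (sub_lt_sub_iff_left x).mp (by linarith [this.1])

theorem exists_mem_ball_ofReal_sub {z : ℂ} (hz : a < z.re) :
    ∃ x : ℝ, z ∈ ball (x : ℂ) (x - a) := by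
  set d := z.re - a
  have hd : 0 < d := sub_pos.mpr hz
  -- with `x - a = (d² + im z²) / d` one gets `(x - a)² - ‖z - x‖² = d² + im z² > 0`
  refine ⟨a + (d ^ 2 + z.im ^ 2) / d, ?_⟩
  have hr : 0 < a + (d ^ 2 + z.im ^ 2) / d - a := by ring_nf; positivity
  rw [mem_ball_iff_norm, ← sq_lt_sq₀ (norm_nonneg _) hr.le, Complex.sq_norm, normSq_apply]
  simp only [sub_re, ofReal_re, sub_im, ofReal_im, sub_zero]
  rw [show z.re = a + d by ring]
  field_simp
  nlinarith [pow_pos hd 4, mul_nonneg (sq_nonneg d) (sq_nonneg z.im)]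

theorem wedgeIntegral_ofReal_sub_wedgeIntegral_ofReal (hf : ContinuousOn f {w | a < w.re})
    {c c' : ℝ} (hc : a < c) (hc' : a < c') {w : ℂ} (hw : a < w.re) :
    wedgeIntegral c w f - wedgeIntegral c' w f = ∫ x in c..c', f x := by
  have hint : ∀ x₁ x₂ : ℝ, a < x₁ → a < x₂ → IntervalIntegrable (fun x : ℝ => f x) volume x₁ x₂ :=
    fun x₁ x₂ h₁ h₂ => ContinuousOn.intervalIntegrable <|
      hf.comp continuous_ofReal.continuousOn fun x hx => (lt_min h₁ h₂).trans_le hx.1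
  simp only [wedgeIntegral, ofReal_re, ofReal_im, ofReal_zero, zero_mul, add_zero]
  rw [← integral_add_adjacent_intervals (hint c c' hc hc') (hint c' w.re hc' hw)]
  abel

theorem _root_.DifferentiableOn.hasDerivAt_wedgeIntegral_ofReal [CompleteSpace E]
    (hf : DifferentiableOn ℂ f {w | a < w.re}) {c : ℝ} (hc : a < c) {z : ℂ} (hz : a < z.re) :
    HasDerivAt (fun w => wedgeIntegral c w f) (f z) z := by
  obtain ⟨x, hzx⟩ := exists_mem_ball_ofReal_sub hz
  have hball := ball_ofReal_subset_re_gt a x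
  have hx : a < x := sub_pos.mp (pos_of_mem_ball hzx)
  have hderiv := (hf.mono hball).isConservativeOn.hasDerivAt_wedgeIntegral
    (hf.continuousOn.mono hball) hzx
  refine (hderiv.const_add (∫ t in c..x, f t)).congr_of_eventuallyEq ?_
  filter_upwards [(isOpen_lt continuous_const continuous_re).mem_nhds hz] with w hw
  rw [← wedgeIntegral_ofReal_sub_wedgeIntegral_ofReal hf.continuousOn hc hx hw]
  abel

theorem wedgeIntegral_add_int_mul_eq_of_antiperiodic (hf : ContinuousOn f {w | a < w.re})
    {p : ℝ} (hanti : ∀ w : ℂ, a < w.re → f (w + p * I) = -f w) (z : ℂ) {w : ℂ} (hw : a < w.re)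
    (n : ℤ) : wedgeIntegral z (w + n * (2 * p * I)) f = wedgeIntegral z w f := by
  have hg : Function.Antiperiodic (fun y : ℝ => f (w.re + y * I)) p := fun y => by
    rw [← hanti _ (by simpa using hw)]
    push_cast
    ring_nf
  have hint : ∀ y₁ y₂, IntervalIntegrable (fun y : ℝ => f (w.re + y * I)) volume y₁ y₂ :=
    (hf.comp_continuous (by fun_prop) fun y => by simpa using hw).intervalIntegrable
  have hre : (w + n * (2 * p * I)).re = w.re := by simp
  have him : (w + n * (2 * p * I)).im = w.im + n * (2 * p) := by simp
  simp only [wedgeIntegral, hre, him]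
  rw [← integral_add_adjacent_intervals (hint z.im w.im) (hint w.im _),
    hg.intervalIntegral_add_int_mul_eq_zero hint n w.im, add_zero]

theorem exists_local_branch_log {z : ℂ} (hz : z ≠ 0) :
    ∃ L : ℂ → ℂ, L z = log z ∧ HasDerivAt L z⁻¹ z ∧ ∀ᶠ u in 𝓝 z, exp (L u) = u := by
  refine ⟨fun u => log z + log (u / z), by simp [hz], ?_, ?_⟩
  · have hdiv : HasDerivAt (fun u => u / z) (1 / z) z := (hasDerivAt_id z).div_const z
    have hlog : HasDerivAt log (z / z)⁻¹ (z / z) :=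
      hasDerivAt_log (by rw [div_self hz]; exact one_mem_slitPlane)
    simpa [div_self hz] using (hlog.comp (h := fun u => u / z) z hdiv).const_add (log z)
  · filter_upwards [isOpen_ne.mem_nhds hz] with u hu
    rw [exp_add, exp_log hz, exp_log (div_ne_zero hu hz), mul_div_cancel₀ _ hz]

theorem _root_.HasDerivAt.comp_log_of_periodic {F : ℂ → E} {S : Set ℂ} (hS : IsOpen S)
    (hper : ∀ w ∈ S, ∀ n : ℤ, F (w + n * (2 * π * I)) = F w) {z : ℂ} (hz : z ≠ 0)
    (hzS : log z ∈ S) {e : E} (hF : HasDerivAt F e (log z)) :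
    HasDerivAt (fun u => F (log u)) (z⁻¹ • e) z := by
  obtain ⟨L, hLz, hL, hexpL⟩ := exists_local_branch_log hz
  rw [← hLz] at hF hzS
  refine (hF.scomp z hL).congr_of_eventuallyEq ?_
  filter_upwards [hexpL, hL.continuousAt.preimage_mem_nhds (hS.mem_nhds hzS),
    isOpen_ne.mem_nhds hz] with u hexp hLu hu
  obtain ⟨n, hn⟩ := exp_eq_exp_iff_exists_int.mp ((exp_log hu).trans hexp.symm)
  rw [Function.comp_apply, hn, hper _ hLu]

end Complex

/-- An even holomorphic function on a neighborhood of infinity has vanishing residue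
at infinity, hence admits a single-valued primitive there. -/
theorem even_holomorphic_has_primitive_near_infinity (R : ℝ) (hR : 0 < R) (h : ℂ → ℂ)
    (hdiff : ∀ z : ℂ, R < ‖z‖ → DifferentiableAt ℂ h z)
    (heven : ∀ z : ℂ, R < ‖z‖ → h (-z) = h z) :
    ∃ f : ℂ → ℂ, ∀ z : ℂ, R < ‖z‖ → HasDerivAt f (h z) z := by
  set a := Real.log R
  set φ : ℂ → ℂ := fun w => exp w * h (exp w)
  have hexp : ∀ w : ℂ, a < w.re → R < ‖exp w‖ := fun w hw => by
    rwa [norm_exp, ← Real.log_lt_iff_lt_exp hR]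
  have hφ : DifferentiableOn ℂ φ {w | a < w.re} := fun w hw =>
    (differentiableAt_exp.mul ((hdiff _ (hexp w hw)).comp w differentiableAt_exp))
      |>.differentiableWithinAt
  have hanti : ∀ w : ℂ, a < w.re → φ (w + π * I) = -φ w := fun w hw => by
    simp only [φ, exp_add, exp_pi_mul_I, mul_neg_one, heven _ (hexp w hw), neg_mul]
  refine ⟨fun z => wedgeIntegral (a + 1 : ℝ) (log z) φ, fun z hz => ?_⟩
  have hz0 : z ≠ 0 := norm_pos_iff.mp (hR.trans hz)
  have hlog : a < (log z).re := by rw [log_re]; exact Real.log_lt_log hR hz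
  have hprim := (hφ.hasDerivAt_wedgeIntegral_ofReal (lt_add_one a) hlog).comp_log_of_periodic
    (isOpen_lt continuous_const continuous_re)
    (fun w hw n => wedgeIntegral_add_int_mul_eq_of_antiperiodic hφ.continuousOn hanti _ hw n)
    hz0 hlog
  simpa [φ, exp_log hz0, hz0] using hprim
end

section
/- Let β ∈ ℝ and z₁, z₂ ∈ ℂ. Then there exist R > 0 and a function f : ℂ → ℂ such that: (i) for every z ∈ ℂ with |z| > R, f has derivative Complex.exp((2β : ℂ) · Complex.log((z² − z₁²)/(z² − z₂²))) at z; and (ii) there exists R' ≥ R such that f is injective on {z ∈ ℂ : |z| > R'}. (The developing map of the metric quadrupole with complexified conformal factor ρ_ℂ(z) = 2β log((z−z₁)(z+z₁)/((z−z₂)(z+z₂))) is single-valued and one-to-one in a neighborhood of infinity; this is the complex-analytic content of the theorem that a two-dimensional quadrupole defect, such as the Stone–Wales defect, is purely local.) -/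
/-!
In the coordinate `w = 1/z` at infinity the density `e^{ρ_ℂ}` becomes
`φ(w) = ((1 - z₁²w²) / (1 - z₂²w²))^{2β}`, which is analytic and even near `0` with `φ(0) = 1`,
hence `φ(w) = 1 + w² g(w)` with `g` holomorphic on a disk. If `G` is a primitive of `g`, then
`f(z) = z - G(1/z)` has `f'(z) = 1 + g(1/z)/z² = φ(1/z)`. On a smaller closed disk `|g| ≤ K`, so
`G` is `K`-Lipschitz there, and `f(x) = f(y)` gives
`|x - y| = |G(1/x) - G(1/y)| ≤ K |x - y| / (|x| |y|)`, forcing `x = y` once `|x| |y| > K`.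
-/

open Complex Metric Set

theorem Function.Even.deriv {𝕜 E : Type*} [NontriviallyNormedField 𝕜] [NormedAddCommGroup E]
    [NormedSpace 𝕜 E] {f : 𝕜 → E} (hf : f.Even) : (deriv f).Odd := fun x => by
  simpa [hf _] using deriv_comp_neg f (-x)

theorem eq_add_smul_deriv_add_sq_smul_dslope_dslope {𝕜 E : Type*} [NontriviallyNormedField 𝕜]
    [NormedAddCommGroup E] [NormedSpace 𝕜 E] (f : 𝕜 → E) (a b : 𝕜) :
    f b = f a + (b - a) • deriv f a + (b - a) ^ 2 • dslope (dslope f a) a b := by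
  rw [sq, mul_smul, sub_smul_dslope, dslope_same, smul_sub, sub_smul_dslope]
  abel

section NormedField

variable {𝕜 : Type*} [NormedField 𝕜]

theorem inv_mem_ball_zero_of_inv_lt_norm {s : ℝ} (hs : 0 < s) {z : 𝕜} (hz : s⁻¹ < ‖z‖) :
    z⁻¹ ∈ ball (0 : 𝕜) s := by
  rw [mem_ball_zero_iff, norm_inv]
  exact inv_lt_of_inv_lt₀ hs hz

theorem injOn_sub_comp_inv {G : 𝕜 → 𝕜} {s K R : ℝ}
    (hG : ∀ a ∈ ball (0 : 𝕜) s, ∀ b ∈ ball (0 : 𝕜) s, ‖G a - G b‖ ≤ K * ‖a - b‖)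
    (hs : 0 < s) (hsR : s⁻¹ ≤ R) (hKR : K ≤ R ^ 2) :
    InjOn (fun z => z - G z⁻¹) {z | R < ‖z‖} := by
  intro x (hx : R < ‖x‖) y (hy : R < ‖y‖) hxy
  by_contra hne
  have hR : 0 < R := (inv_pos.2 hs).trans_le hsR
  have hx0 : x ≠ 0 := norm_pos_iff.1 (hR.trans hx)
  have hy0 : y ≠ 0 := norm_pos_iff.1 (hR.trans hy)
  have hd : 0 < ‖x - y‖ := norm_pos_iff.2 (sub_ne_zero.2 hne)
  have hxy_le : ‖x‖ * ‖y‖ ≤ K := by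
    have key : ‖x - y‖ ≤ K * (‖x - y‖ / (‖x‖ * ‖y‖)) := calc
      ‖x - y‖ = ‖G x⁻¹ - G y⁻¹‖ := by rw [sub_eq_sub_iff_sub_eq_sub.1 hxy]
      _ ≤ K * ‖x⁻¹ - y⁻¹‖ := hG _ (inv_mem_ball_zero_of_inv_lt_norm hs (hsR.trans_lt hx)) _
          (inv_mem_ball_zero_of_inv_lt_norm hs (hsR.trans_lt hy))
      _ = K * (‖x - y‖ / (‖x‖ * ‖y‖)) := by
        rw [inv_sub_inv hx0 hy0, norm_div, norm_mul, norm_sub_rev]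
    rw [mul_div_assoc', le_div_iff₀ (by positivity)] at key
    exact le_of_mul_le_mul_left (key.trans_eq (mul_comm _ _)) hd
  nlinarith [mul_lt_mul'' hx hy hR.le hR.le]

end NormedField

theorem exists_primitive_comp_inv_injOn_near_infinity {φ : ℂ → ℂ} (hφ : AnalyticAt ℂ φ 0)
    (hφ₀ : φ 0 = 1) (hφ₀' : deriv φ 0 = 0) :
    ∃ R > (0 : ℝ), ∃ f : ℂ → ℂ, (∀ z : ℂ, R < ‖z‖ → HasDerivAt f (φ z⁻¹) z) ∧
      ∃ R' : ℝ, R ≤ R' ∧ InjOn f {z : ℂ | R' < ‖z‖} := by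
  obtain ⟨r, hr, hφr⟩ := hφ.exists_ball_analyticOnNhd
  set g := dslope (dslope φ 0) 0
  have hφg : ∀ w, φ w = 1 + w ^ 2 * g w := fun w => by
    simpa [hφ₀, hφ₀'] using eq_add_smul_deriv_add_sq_smul_dslope_dslope φ 0 w
  have hg : DifferentiableOn ℂ g (ball 0 r) := by
    have hnhds := ball_mem_nhds (0 : ℂ) hr
    exact (differentiableOn_dslope hnhds).2 ((differentiableOn_dslope hnhds).2 hφr.differentiableOn)
  obtain ⟨G, hG⟩ := hg.isExactOn_ball
  have hs : 0 < r / 2 := half_pos hr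
  have hsub : closedBall (0 : ℂ) (r / 2) ⊆ ball 0 r := closedBall_subset_ball (half_lt_self hr)
  obtain ⟨K, hK⟩ := (isCompact_closedBall (0 : ℂ) (r / 2)).exists_bound_of_continuousOn
    (hg.continuousOn.mono hsub)
  have hK₀ : 0 ≤ K := (norm_nonneg _).trans (hK 0 (mem_closedBall_self hs.le))
  have hG_lip : ∀ a ∈ ball (0 : ℂ) (r / 2), ∀ b ∈ ball (0 : ℂ) (r / 2),
      ‖G a - G b‖ ≤ K * ‖a - b‖ := fun a ha b hb =>
    (convex_ball _ _).norm_image_sub_le_of_norm_hasDerivWithin_le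
      (fun w hw => (hG w (hsub (ball_subset_closedBall hw))).hasDerivWithinAt)
      (fun w hw => hK w (ball_subset_closedBall hw)) hb ha
  refine ⟨(r / 2)⁻¹, inv_pos.2 hs, fun z => z - G z⁻¹, fun z hz => ?_,
    (r / 2)⁻¹ + K + 1, by linarith, injOn_sub_comp_inv hG_lip hs (by linarith) ?_⟩
  · have hz₀ : z ≠ 0 := norm_pos_iff.1 ((inv_pos.2 hs).trans hz)
    have hw := hsub (ball_subset_closedBall (inv_mem_ball_zero_of_inv_lt_norm hs hz))
    refine ((hasDerivAt_id z).sub ((hG _ hw).comp z (hasDerivAt_inv hz₀))).congr_deriv ?_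
    rw [hφg, inv_pow]
    ring
  · nlinarith [inv_pos.2 hs]

noncomputable def quadrupoleDensityAtInfinity (β : ℝ) (z₁ z₂ w : ℂ) : ℂ :=
  exp (2 * β * log ((1 - z₁ ^ 2 * w ^ 2) / (1 - z₂ ^ 2 * w ^ 2)))

section Quadrupole

variable (β : ℝ) (z₁ z₂ : ℂ)

theorem analyticAt_quadrupoleDensityAtInfinity :
    AnalyticAt ℂ (quadrupoleDensityAtInfinity β z₁ z₂) 0 := by
  unfold quadrupoleDensityAtInfinity
  exact (analyticAt_const.mul ((AnalyticAt.div (by fun_prop) (by fun_prop) (by simp)).clog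
    (by simp))).cexp'

theorem quadrupoleDensityAtInfinity_zero : quadrupoleDensityAtInfinity β z₁ z₂ 0 = 1 := by
  simp [quadrupoleDensityAtInfinity]

theorem even_quadrupoleDensityAtInfinity : (quadrupoleDensityAtInfinity β z₁ z₂).Even := by
  intro w
  simp [quadrupoleDensityAtInfinity]

theorem quadrupoleDensityAtInfinity_inv {z : ℂ} (hz : z ≠ 0) :
    quadrupoleDensityAtInfinity β z₁ z₂ z⁻¹ =
      exp (2 * β * log ((z ^ 2 - z₁ ^ 2) / (z ^ 2 - z₂ ^ 2))) := by
  rw [quadrupoleDensityAtInfinity, ← mul_div_mul_left _ _ (pow_ne_zero 2 hz)]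
  congr 4 <;> field_simp

end Quadrupole

/-- The developing map of the metric quadrupole (e.g. the Stone–Wales defect), whose
complexified conformal factor is `ρ_ℂ(z) = 2β log((z-z₁)(z+z₁)/((z-z₂)(z+z₂)))`, is
single-valued (a global primitive of `e^{ρ_ℂ}` exists near infinity) and injective in
a neighborhood of infinity. -/
theorem quadrupole_developing_map_injective_near_infinity (β : ℝ) (z₁ z₂ : ℂ) :
    ∃ R > (0 : ℝ), ∃ f : ℂ → ℂ,
      (∀ z : ℂ, R < ‖z‖ →
        HasDerivAt f
          (Complex.exp ((2 * (β : ℂ)) *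
            Complex.log ((z ^ 2 - z₁ ^ 2) / (z ^ 2 - z₂ ^ 2)))) z) ∧
      ∃ R' : ℝ, R ≤ R' ∧ Set.InjOn f {z : ℂ | R' < ‖z‖} := by
  obtain ⟨R, hR, f, hf, hinj⟩ := exists_primitive_comp_inv_injOn_near_infinity
    (analyticAt_quadrupoleDensityAtInfinity β z₁ z₂) (quadrupoleDensityAtInfinity_zero β z₁ z₂)
    (even_quadrupoleDensityAtInfinity β z₁ z₂).deriv.map_zero
  refine ⟨R, hR, f, fun z hz => ?_, hinj⟩
  rw [← quadrupoleDensityAtInfinity_inv β z₁ z₂ (norm_pos_iff.1 (hR.trans hz))]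
  exact hf z hz
end
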